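/- arXiv:2511.21481 — 2 statements merged into one kernel-verified Lean document; each statement's English description precedes it below -/
import Mathlib

section
/- Fix n ∈ ℕ and a sequence (U_i)_{i≥0} of subsets of {1,…,n}, with the reset functions and the cycle-completion relation defined as in the context. Then for every i ≥ 0, if reset_{U_i}(i) ≥ 0, say reset_{U_i}(i) = r, then V_i ⊆ V_r. -/
-- `resetAux n U i A` is the integer `reset_A(i)` of the paper: `reset_A(0) = -1`, and
-- `reset_A(i+1) = i` if some `B ⊆ {1,…,n}` with `B ⊇ A` completes a cycle at stage `i`
-- (i.e. `⋃_{reset_B(i) < h ≤ i} U_h = B`), and `reset_A(i+1) = reset_A(i)` otherwise.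
open Classical in
noncomputable def resetAux (n : ℕ) (U : ℕ → Finset ℕ) : ℕ → Finset ℕ → ℤ
  | 0 => fun _ => -1
  | i + 1 => fun A =>
      if ∃ B, B ⊆ Finset.Icc 1 n ∧ A ⊆ B ∧
          ((Finset.range (i + 1)).filter
            (fun h : ℕ => resetAux n U i B < (h : ℤ))).biUnion U = B
      then (i : ℤ)
      else resetAux n U i A

/-- `B` completes a cycle at stage `i`: `⋃_{reset_B(i) < h ≤ i} U_h = B`. -/
def CompletesCycle (n : ℕ) (U : ℕ → Finset ℕ) (i : ℕ) (B : Finset ℕ) : Prop :=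
  ((Finset.range (i + 1)).filter (fun h : ℕ => resetAux n U i B < (h : ℤ))).biUnion U = B

/-- `V_i := ⋃_{reset_{U_i}(i) < h ≤ i} U_h`. -/
noncomputable def V (n : ℕ) (U : ℕ → Finset ℕ) (i : ℕ) : Finset ℕ :=
  ((Finset.range (i + 1)).filter (fun h : ℕ => resetAux n U i (U i) < (h : ℤ))).biUnion U

/-!
Write `S(q, h) = ⋃_{q < t ≤ h} U_t` (`unionIoc U q h`), so that `B` completes a cycle at `h` iff
`S(reset_B(h), h) = B`. Two facts drive the argument. Once `reset_A(i) = ρ`, no superset of `A`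
completes a cycle at a stage in `(ρ, i)`, since it would have reset `A` later than `ρ`. And if
`reset_{S(q,h)}(h) ≤ q`, iterating `q ↦ reset_{S(q,h)}(h)` enlarges `S(q,h)` until it reaches a
set completing a cycle at `h`. Hence `A ⊆ S(ρ, s) ∪ F` is impossible when `F` completes a cycle at
some `s ∈ (ρ, i)`: `F` is `S(f, s)` for some `f`, so either `F ⊇ S(ρ, s)` and `A ⊆ F`, or
`F ⊆ S(ρ, s)` and `A ⊆ S(ρ, s)`, which lies in a set completing a cycle at `s`. This shows that at
most one set completes a cycle at each stage `r`; that set is `V_r`, and when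
`r = reset_{U_i}(i)` it contains every `U_h` with `r < h ≤ i`.
-/

def unionIoc (U : ℕ → Finset ℕ) (q : ℤ) (h : ℕ) : Finset ℕ :=
  ((Finset.range (h + 1)).filter (fun t : ℕ => q < (t : ℤ))).biUnion U

section unionIoc

variable {U : ℕ → Finset ℕ} {q q' : ℤ} {m h : ℕ}

theorem mem_unionIoc {x : ℕ} : x ∈ unionIoc U q h ↔ ∃ t ≤ h, q < (t : ℤ) ∧ x ∈ U t := by
  simp only [unionIoc, Finset.mem_biUnion, Finset.mem_filter, Finset.mem_range, Nat.lt_succ_iff,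
    and_assoc]

theorem subset_unionIoc {t : ℕ} (hqt : q < (t : ℤ)) (hth : t ≤ h) : U t ⊆ unionIoc U q h :=
  fun _ hx => mem_unionIoc.mpr ⟨t, hth, hqt, hx⟩

theorem unionIoc_subset_unionIoc_left (hq : q' ≤ q) : unionIoc U q h ⊆ unionIoc U q' h := by
  intro x hx
  obtain ⟨t, hth, hqt, hxt⟩ := mem_unionIoc.mp hx
  exact mem_unionIoc.mpr ⟨t, hth, hq.trans_lt hqt, hxt⟩

theorem unionIoc_subset_unionIoc_right (hmh : m ≤ h) : unionIoc U q m ⊆ unionIoc U q h := by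
  intro x hx
  obtain ⟨t, htm, hqt, hxt⟩ := mem_unionIoc.mp hx
  exact mem_unionIoc.mpr ⟨t, htm.trans hmh, hqt, hxt⟩

theorem unionIoc_union_unionIoc (hqm : q ≤ m) (hmh : m ≤ h) :
    unionIoc U q m ∪ unionIoc U m h = unionIoc U q h := by
  refine subset_antisymm (Finset.union_subset (unionIoc_subset_unionIoc_right hmh)
    (unionIoc_subset_unionIoc_left hqm)) fun x hx => ?_
  obtain ⟨t, hth, hqt, hxt⟩ := mem_unionIoc.mp hx
  rcases le_or_gt t m with htm | hmt
  · exact Finset.mem_union_left _ (subset_unionIoc hqt htm hxt)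
  · exact Finset.mem_union_right _ (subset_unionIoc (by exact_mod_cast hmt) hth hxt)

theorem unionIoc_subset_Icc {n : ℕ} (hU : ∀ i, U i ⊆ Finset.Icc 1 n) :
    unionIoc U q h ⊆ Finset.Icc 1 n := by
  intro x hx
  obtain ⟨t, -, -, hxt⟩ := mem_unionIoc.mp hx
  exact hU t hxt

end unionIoc

section reset

variable {n : ℕ} {U : ℕ → Finset ℕ} {i : ℕ} {A B : Finset ℕ}

theorem V_eq_unionIoc : V n U i = unionIoc U (resetAux n U i (U i)) i := rfl

theorem completesCycle_iff : CompletesCycle n U i B ↔ unionIoc U (resetAux n U i B) i = B :=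
  Iff.rfl

open Classical in
theorem resetAux_succ :
    resetAux n U (i + 1) A =
      if ∃ B, B ⊆ Finset.Icc 1 n ∧ A ⊆ B ∧ CompletesCycle n U i B then (i : ℤ)
      else resetAux n U i A := rfl

theorem resetAux_lt : resetAux n U i A < i := by
  induction i with
  | zero => simp [resetAux]
  | succ i ih =>
    rw [resetAux_succ]
    split_ifs <;> push_cast <;> omega

theorem neg_one_le_resetAux : -1 ≤ resetAux n U i A := by
  induction i with
  | zero => simp [resetAux]
  | succ i ih =>
    rw [resetAux_succ]
    split_ifs <;> omega

theorem resetAux_mono (A : Finset ℕ) : Monotone (resetAux n U · A) :=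
  monotone_nat_of_le_succ fun i => by
    rw [resetAux_succ]
    split_ifs
    exacts [resetAux_lt.le, le_rfl]

theorem resetAux_anti (hAB : A ⊆ B) : resetAux n U i B ≤ resetAux n U i A := by
  induction i with
  | zero => rfl
  | succ i ih =>
    simp only [resetAux_succ]
    split_ifs with hB hA hA
    · rfl
    · obtain ⟨C, hC, hBC, hcyc⟩ := hB
      exact absurd ⟨C, hC, hAB.trans hBC, hcyc⟩ hA
    · exact resetAux_lt.le
    · exact ih

theorem exists_natCast_eq_of_resetAux_lt {a : ℤ} (h : resetAux n U i A < a) :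
    ∃ c : ℕ, a = c :=
  Int.eq_ofNat_of_zero_le (by linarith [neg_one_le_resetAux (n := n) (U := U) (i := i) (A := A)])

theorem CompletesCycle.U_subset (hB : CompletesCycle n U i B) : U i ⊆ B :=
  hB ▸ _root_.subset_unionIoc resetAux_lt le_rfl

theorem exists_completesCycle_of_resetAux_eq {r : ℕ} (hr : resetAux n U i A = r) :
    ∃ B, A ⊆ B ∧ CompletesCycle n U r B := by
  induction i with
  | zero => simp [resetAux] at hr
  | succ i ih =>
    rw [resetAux_succ] at hr
    split_ifs at hr with h
    · obtain ⟨B, -, hAB, hB⟩ := h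
      obtain rfl : i = r := by exact_mod_cast hr
      exact ⟨B, hAB, hB⟩
    · exact ih hr

theorem exists_completesCycle_superset_unionIoc {q : ℤ}
    (hq : resetAux n U i (unionIoc U q i) ≤ q) :
    ∃ B, unionIoc U q i ⊆ B ∧ CompletesCycle n U i B := by
  induction hk : (q + 1).toNat using Nat.strong_induction_on generalizing q with
  | _ k ih =>
  obtain hq | hq := hq.eq_or_lt
  · exact ⟨_, subset_rfl, by rw [completesCycle_iff, hq]⟩
  · have hsub := unionIoc_subset_unionIoc_left (U := U) (h := i) hq.le
    have hbot := neg_one_le_resetAux (n := n) (U := U) (i := i) (A := unionIoc U q i)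
    obtain ⟨B, hB, hcyc⟩ := ih _ (by omega) (resetAux_anti hsub) rfl
    exact ⟨B, hsub.trans hB, hcyc⟩

variable (hU : ∀ i, U i ⊆ Finset.Icc 1 n)
include hU

theorem not_completesCycle_of_resetAux_lt {s : ℕ} (hAs : resetAux n U i A < s) (hsi : s < i)
    (hAB : A ⊆ B) : ¬ CompletesCycle n U s B := by
  intro hB
  have hreset : resetAux n U (s + 1) A = s := by
    rw [resetAux_succ, if_pos ⟨B, hB ▸ unionIoc_subset_Icc hU, hAB, hB⟩]
  have : resetAux n U (s + 1) A ≤ resetAux n U i A := resetAux_mono A hsi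
  omega

theorem not_subset_unionIoc_union_of_completesCycle {s : ℕ} {F : Finset ℕ}
    (hAs : resetAux n U i A < s) (hsi : s < i) (hF : CompletesCycle n U s F) :
    ¬ A ⊆ unionIoc U (resetAux n U i A) s ∪ F := by
  intro hA
  set ρ := resetAux n U i A
  rcases le_or_gt (resetAux n U s F) ρ with hFρ | hρF
  · have : unionIoc U ρ s ⊆ F := hF ▸ unionIoc_subset_unionIoc_left hFρ
    exact not_completesCycle_of_resetAux_lt hU hAs hsi
      (hA.trans (Finset.union_subset this subset_rfl)) hF
  · have hAS : A ⊆ unionIoc U ρ s :=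
      hA.trans (Finset.union_subset subset_rfl (hF ▸ unionIoc_subset_unionIoc_left hρF.le))
    obtain ⟨G, hSG, hG⟩ := exists_completesCycle_superset_unionIoc
      ((resetAux_anti hAS).trans (resetAux_mono A hsi.le))
    exact not_completesCycle_of_resetAux_lt hU hAs hsi (hAS.trans hSG) hG

theorem CompletesCycle.resetAux_le {C : Finset ℕ} (hB : CompletesCycle n U i B)
    (hC : CompletesCycle n U i C) : resetAux n U i C ≤ resetAux n U i B := by
  by_contra! hlt
  obtain ⟨c, hc⟩ := exists_natCast_eq_of_resetAux_lt hlt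
  obtain ⟨F, hCF, hF⟩ := exists_completesCycle_of_resetAux_eq hc
  have hci : c < i := by exact_mod_cast hc ▸ resetAux_lt
  have hbc : resetAux n U i B < c := hc ▸ hlt
  refine not_subset_unionIoc_union_of_completesCycle hU hbc hci hF ?_
  calc B = unionIoc U (resetAux n U i B) i := hB.symm
    _ = unionIoc U (resetAux n U i B) c ∪ unionIoc U c i :=
      (unionIoc_union_unionIoc hbc.le hci.le).symm
    _ ⊆ unionIoc U (resetAux n U i B) c ∪ F := by
      rw [← hc, completesCycle_iff.mp hC]
      exact Finset.union_subset_union subset_rfl hCF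

theorem CompletesCycle.eq {C : Finset ℕ} (hB : CompletesCycle n U i B)
    (hC : CompletesCycle n U i C) : B = C := by
  rw [← hB, ← hC, le_antisymm (hC.resetAux_le hU hB) (hB.resetAux_le hU hC)]

theorem unionIoc_subset_of_completesCycle {r : ℕ} {C : Finset ℕ}
    (hr : resetAux n U i (U i) = r) (hC : CompletesCycle n U r C) (hUC : U i ⊆ C) :
    unionIoc U r i ⊆ C := by
  intro x hx
  obtain ⟨t, hti, hrt, hxt⟩ := mem_unionIoc.mp hx
  obtain rfl | hti := hti.eq_or_lt
  · exact hUC hxt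
  -- `S(q, t) ⊇ C ∪ U_i` has reset exactly `r` at stage `t`, so it lies in the set completing a
  -- cycle at `r`, which is `C`.
  set q := resetAux n U r C
  have hrt' : r < t := by exact_mod_cast hrt
  have hCE : C ⊆ unionIoc U q t := hC ▸ unionIoc_subset_unionIoc_right hrt'.le
  have hsr : resetAux n U t (unionIoc U q t) ≤ r :=
    (resetAux_anti (hUC.trans hCE)).trans (hr ▸ resetAux_mono (U i) hti.le)
  rcases le_or_gt (resetAux n U t (unionIoc U q t)) q with hsq | hqs
  · obtain ⟨G, hEG, hG⟩ := exists_completesCycle_superset_unionIoc hsq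
    exact absurd hG (not_completesCycle_of_resetAux_lt hU (hr ▸ hrt) hti
      ((hUC.trans hCE).trans hEG))
  obtain ⟨s, hs⟩ := exists_natCast_eq_of_resetAux_lt hqs
  obtain ⟨F, hEF, hF⟩ := exists_completesCycle_of_resetAux_eq hs
  obtain hlt | heq := (hs ▸ hsr).lt_or_eq
  · exact absurd hF (not_completesCycle_of_resetAux_lt hU (hs ▸ hqs) (by exact_mod_cast hlt)
      (hCE.trans hEF))
  · obtain rfl : s = r := by exact_mod_cast heq
    exact (hF.eq hU hC) ▸ hEF (subset_unionIoc (resetAux_lt.trans_le hrt.le) le_rfl hxt)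

theorem V_eq_of_completesCycle {C : Finset ℕ} (hC : CompletesCycle n U i C) : V n U i = C := by
  set q := resetAux n U i C
  suffices hw : resetAux n U i (U i) ≤ q by
    rw [V_eq_unionIoc, le_antisymm hw (resetAux_anti hC.U_subset)]
    exact hC
  by_contra! hqw
  obtain ⟨w, hw⟩ := exists_natCast_eq_of_resetAux_lt hqw
  obtain ⟨D, hUD, hD⟩ := exists_completesCycle_of_resetAux_eq hw
  have hwi : w < i := by exact_mod_cast hw ▸ resetAux_lt
  have hqw' : q < w := hw ▸ hqw
  refine not_subset_unionIoc_union_of_completesCycle hU hqw' hwi hD ?_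
  calc C = unionIoc U q i := hC.symm
    _ = unionIoc U q w ∪ unionIoc U w i := (unionIoc_union_unionIoc hqw'.le hwi.le).symm
    _ ⊆ unionIoc U q w ∪ D := Finset.union_subset_union subset_rfl
      (unionIoc_subset_of_completesCycle hU hw hD hUD)

end reset

/-- for every `i`, if `reset_{U_i}(i) ≥ 0`, say `reset_{U_i}(i) = r`, then
`V_i ⊆ V_r`. -/
theorem stmt_12 (n : ℕ) (U : ℕ → Finset ℕ) (hU : ∀ i, U i ⊆ Finset.Icc 1 n) :
    ∀ i (r : ℕ), resetAux n U i (U i) = (r : ℤ) → V n U i ⊆ V n U r := by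
  intro i r hr
  obtain ⟨C, hUC, hC⟩ := exists_completesCycle_of_resetAux_eq hr
  calc V n U i = unionIoc U r i := by rw [V_eq_unionIoc, hr]
    _ ⊆ C := unionIoc_subset_of_completesCycle hU hr hC hUC
    _ = V n U r := (V_eq_of_completesCycle hU hC).symm
end

section
/- Let X be a linear order, let σ = (σ_i)_{i≥0} be an infinite <_{X^ω}-descending sequence, let c be the first-difference colouring of pairs defined from σ (c(i,j) := |σ_j| if σ_j is a proper initial segment of σ_i, and otherwise the least s with σ_i(s) ≠ σ_j(s)), and suppose H = {h_0 < h_1 < …} is infinite and c-homogeneous with colour c* = 2t (an even number). Then the sequence i ↦ b_t^{h_i} of t-th natural-number exponents of the σ_{h_i} would be strictly decreasing in ℕ, which is impossible; i.e., no infinite c-homogeneous set can have even colour. -/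
/-- `l` represents an element of `X^ω`: a finite sequence of pairs `(b_t, a_t)` with
strictly decreasing natural-number exponents `b_0 > b_1 > … > b_m`. -/
def IsExpSeq {X : Type*} (l : List (ℕ × X)) : Prop :=
  l.Chain' (fun p q => q.1 < p.1)

/-- The `s`-th component of `τ`: at even positions `2t` the exponent `b_t` (in `ℕ`),
at odd positions `2t+1` the coefficient `a_t` (in `X`); `none` if undefined. -/
def comp {X : Type*} (l : List (ℕ × X)) (s : ℕ) : Option (ℕ ⊕ X) :=
  if s % 2 = 0 then (l[s / 2]?).map (fun p => Sum.inl p.1)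
  else (l[s / 2]?).map (fun p => Sum.inr p.2)

/-- The order on `X^ω`: `τ <_{X^ω} σ` iff `τ` is a proper initial segment of `σ`, or at the
least index `s` where both components are defined and differ, the component of `τ` is smaller
(comparing even positions in `ℕ` and odd positions in `X`). -/
def XOmegaLt {X : Type*} [LinearOrder X] (τ σ : List (ℕ × X)) : Prop :=
  (τ <+: σ ∧ τ ≠ σ) ∨
  ∃ s, (∀ r, r < s → comp τ r = comp σ r) ∧
    ∃ a b, comp τ s = some a ∧ comp σ s = some b ∧ Sum.Lex (· < ·) (· < ·) a b

-- The first-difference colouring `c(i,j)` associated to a sequence `σ`: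
-- `c(i,j) = |σ_j|` if `σ_j` is a proper initial segment of `σ_i`, and otherwise
-- the least `s` with `σ_i(s) ≠ σ_j(s)`.
open Classical in
noncomputable def firstDiff {X : Type*} (σs : ℕ → List (ℕ × X)) (i j : ℕ) : ℕ :=
  if σs j <+: σs i ∧ σs j ≠ σs i then 2 * (σs j).length
  else sInf {s | comp (σs i) s ≠ comp (σs j) s}

/-!
Send each `τ ∈ X^ω` to its sequence of components, reading an undefined component as `⊥`.
Then `<_{X^ω}` becomes the lexicographic order on these sequences, and the colouring `c(i, j)`
is, also in the initial-segment case, the first position at which `σ_i` and `σ_j` differ. Hence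
for `i < j` the components at position `c*` strictly decrease from `σ_{h_i}` to `σ_{h_j}`.
At an even position `c* = 2t` these components are the exponents `b_t` (with `⊥` when
undefined), and `WithBot ℕ` has no infinite strictly decreasing sequence.
-/

lemma List.IsPrefix.length_lt_of_ne {α : Type*} {l₁ l₂ : List α} (hp : l₁ <+: l₂) (hne : l₁ ≠ l₂) :
    l₁.length < l₂.length :=
  hp.length_le.lt_of_ne fun h => hne (hp.eq_of_length h)

section Components

variable {X : Type*}

lemma comp_two_mul (τ : List (ℕ × X)) (t : ℕ) :
    comp τ (2 * t) = τ[t]?.map fun p => Sum.inl p.1 := by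
  simp [comp]

lemma comp_eq_of_isPrefix {τ σ : List (ℕ × X)} (hp : τ <+: σ) {r : ℕ}
    (hr : r < 2 * τ.length) : comp τ r = comp σ r := by
  obtain ⟨rest, rfl⟩ := hp
  simp only [comp, List.getElem?_append_left (show r / 2 < τ.length by omega)]

lemma isLeast_comp_ne_of_isPrefix {τ σ : List (ℕ × X)} (hp : τ <+: σ) (hne : τ ≠ σ) :
    IsLeast {s | comp σ s ≠ comp τ s} (2 * τ.length) := by
  refine ⟨?_, fun r hr => not_lt.1 fun hlt => hr (comp_eq_of_isPrefix hp hlt).symm⟩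
  simp [comp_two_mul, hp.length_lt_of_ne hne]

lemma firstDiff_eq_sInf (σs : ℕ → List (ℕ × X)) (i j : ℕ) :
    firstDiff σs i j = sInf {s | comp (σs i) s ≠ comp (σs j) s} := by
  unfold firstDiff
  split_ifs with hp
  · exact (isLeast_comp_ne_of_isPrefix hp.1 hp.2).csInf_eq.symm
  · rfl

def compLex (τ : List (ℕ × X)) (s : ℕ) : WithBot (ℕ ⊕ₗ X) :=
  (comp τ s).map toLex

def exponentAt (τ : List (ℕ × X)) (t : ℕ) : WithBot ℕ :=
  τ[t]?.map Prod.fst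

lemma compLex_eq_compLex_iff {τ σ : List (ℕ × X)} {s : ℕ} :
    compLex τ s = compLex σ s ↔ comp τ s = comp σ s :=
  (Option.map_injective toLex.injective).eq_iff

end Components

lemma apply_sInf_lt_of_toLex_lt {α : Type*} [Preorder α] {f g : ℕ → α}
    (h : toLex f < toLex g) : f (sInf {s | g s ≠ f s}) < g (sInf {s | g s ≠ f s}) := by
  obtain ⟨s, hagree, hlt⟩ := h
  have hleast : IsLeast {s | g s ≠ f s} s :=
    ⟨hlt.ne', fun r hr => not_lt.1 fun hrs => hr (hagree r hrs).symm⟩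
  rwa [hleast.csInf_eq]

section Order

variable {X : Type*} [LinearOrder X]

lemma XOmegaLt.toLex_compLex_lt {τ σ : List (ℕ × X)} (h : XOmegaLt τ σ) :
    toLex (compLex τ) < toLex (compLex σ) := by
  rcases h with ⟨hp, hne⟩ | ⟨s, hagree, a, b, ha, hb, hab⟩
  · refine ⟨2 * τ.length, fun r hr => compLex_eq_compLex_iff.2 (comp_eq_of_isPrefix hp hr), ?_⟩
    show compLex τ _ < compLex σ _
    simp only [compLex, comp_two_mul, List.getElem?_eq_none le_rfl,
      List.getElem?_eq_getElem (hp.length_lt_of_ne hne), Option.map_none, Option.map_some]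
    exact WithBot.bot_lt_coe _
  · refine ⟨s, fun r hr => compLex_eq_compLex_iff.2 (hagree r hr), ?_⟩
    show compLex τ s < compLex σ s
    simp only [compLex, ha, hb, Option.map_some]
    exact WithBot.coe_lt_coe.2 hab

lemma compLex_two_mul_lt_iff {τ σ : List (ℕ × X)} {t : ℕ} :
    compLex τ (2 * t) < compLex σ (2 * t) ↔ exponentAt τ t < exponentAt σ t := by
  have hinl : StrictMono fun n : ℕ => toLex (Sum.inl n : ℕ ⊕ X) :=
    fun _ _ => Sum.Lex.inl_lt_inl_iff.2
  have hmap (ρ : List (ℕ × X)) :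
      compLex ρ (2 * t) = WithBot.map (fun n => toLex (Sum.inl n)) (exponentAt ρ t) := by
    simp only [compLex, exponentAt, comp_two_mul, WithBot.map, Option.map_map]
    rfl
  rw [hmap, hmap]
  exact hinl.withBot_map.lt_iff_lt

lemma compLex_firstDiff_lt {σs : ℕ → List (ℕ × X)} (hdesc : ∀ i, XOmegaLt (σs (i + 1)) (σs i))
    {i j : ℕ} (hij : i < j) :
    compLex (σs j) (firstDiff σs i j) < compLex (σs i) (firstDiff σs i j) := by
  have hanti : StrictAnti fun k => toLex (compLex (σs k)) :=
    strictAnti_nat_of_succ_lt fun k => (hdesc k).toLex_compLex_lt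
  simpa only [firstDiff_eq_sInf, ne_eq, compLex_eq_compLex_iff]
    using apply_sInf_lt_of_toLex_lt (hanti hij)

end Order

theorem stmt_15_general {X : Type*} [LinearOrder X] (σs : ℕ → List (ℕ × X))
    (hdesc : ∀ i, XOmegaLt (σs (i + 1)) (σs i))
    (h : ℕ → ℕ) (hmono : StrictMono h)
    (cstar : ℕ) (hhom : ∀ i j, i < j → firstDiff σs (h i) (h j) = cstar) :
    (cstar % 2 = 0 → ∀ i j, i < j → ∀ b b' : ℕ,
      comp (σs (h i)) cstar = some (Sum.inl b) →
      comp (σs (h j)) cstar = some (Sum.inl b') → b' < b) ∧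
    cstar % 2 ≠ 0 := by
  have hlt : ∀ i j, i < j → compLex (σs (h j)) cstar < compLex (σs (h i)) cstar :=
    fun i j hij => hhom i j hij ▸ compLex_firstDiff_lt hdesc (hmono hij)
  refine ⟨fun _ i j hij b b' hb hb' => ?_, fun heven => ?_⟩
  · have hbb' := hlt i j hij
    simp only [compLex, hb, hb', Option.map_some] at hbb'
    exact Sum.Lex.inl_lt_inl_iff.1 (WithBot.coe_lt_coe.1 hbb')
  have hcstar : cstar = 2 * (cstar / 2) := by omega
  refine not_strictAnti_of_wellFoundedLT (fun k => exponentAt (σs (h k)) (cstar / 2)) ?_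
  exact strictAnti_nat_of_succ_lt fun k =>
    compLex_two_mul_lt_iff.1 (hcstar ▸ hlt k (k + 1) k.lt_succ_self)

/-- if `H = {h_0 < h_1 < …}` is infinite and `c`-homogeneous with even colour
`c* = 2t`, then the sequence of `t`-th natural-number exponents (the components at position
`c*`) of the `σ_{h_i}` would be strictly decreasing in `ℕ`; this is impossible, so no infinite
`c`-homogeneous set can have even colour. -/
theorem stmt_15 {X : Type*} [LinearOrder X] (σs : ℕ → List (ℕ × X))
    (hvalid : ∀ i, IsExpSeq (σs i))
    (hdesc : ∀ i, XOmegaLt (σs (i + 1)) (σs i))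
    (h : ℕ → ℕ) (hmono : StrictMono h)
    (cstar : ℕ) (hhom : ∀ i j, i < j → firstDiff σs (h i) (h j) = cstar) :
    (cstar % 2 = 0 → ∀ i j, i < j → ∀ b b' : ℕ,
      comp (σs (h i)) cstar = some (Sum.inl b) →
      comp (σs (h j)) cstar = some (Sum.inl b') → b' < b) ∧
    cstar % 2 ≠ 0 :=
  stmt_15_general σs hdesc h hmono cstar hhom
end
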